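/- Let G = (I ∪ J, E) be a finite bipartite graph, q ∈ ℤ>0, x̄ : I → ℤ≥0, a, b : J → ℤ≥0 with a ≤ b, and Γ with Σ_j a(j) ≤ Γ ≤ Σ_j b(j). If there exists a subset S ⊆ J with Σ_{i∈N(S)} q·x̄(i) < min{b(S), Γ − a(J∖S)}, then there exists an extreme scenario ξ (i.e., a ≤ ξ ≤ b, Σ_j ξ(j) = Γ) and functions μ : I → {0,1}, ν : J → {0,1} with μ(i) ≥ ν(j) for all edges {i,j} ∈ E and Σ_{i∈I} q·x̄(i)·μ(i) − Σ_{j∈J} ξ(j)·ν(j) < 0. -/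
import Mathlib


open Finset

lemma exists_mid {J : Type*} [DecidableEq J] (a b : J → ℤ) (hab : ∀ j, a j ≤ b j) :
    ∀ (T : Finset J) (t : ℤ), (∑ j ∈ T, a j) ≤ t → t ≤ ∑ j ∈ T, b j →
    ∃ ξ : J → ℤ, (∀ j, a j ≤ ξ j) ∧ (∀ j, ξ j ≤ b j) ∧ ∑ j ∈ T, ξ j = t := by
  intro T
  induction T using Finset.induction_on with
  | empty =>
    intro t h1 h2
    simp only [Finset.sum_empty] at h1 h2 ⊢
    exact ⟨a, fun j => le_refl _, hab, le_antisymm h1 h2⟩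
  | @insert j T hj ih =>
    intro t h1 h2
    rw [Finset.sum_insert hj] at h1 h2
    set c := min (b j) (t - ∑ k ∈ T, a k) with hc
    have hca : a j ≤ c := by
      apply le_min (hab j)
      linarith
    have h1' : ∑ k ∈ T, a k ≤ t - c := by
      have : c ≤ t - ∑ k ∈ T, a k := min_le_right _ _
      linarith
    have h2' : t - c ≤ ∑ k ∈ T, b k := by
      have : t - b j ≤ ∑ k ∈ T, b k := by linarith
      have hcb : c ≤ b j := min_le_left _ _
      have habT : ∑ k ∈ T, a k ≤ ∑ k ∈ T, b k :=
        Finset.sum_le_sum fun k _ => hab k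
      rcases le_total (b j) (t - ∑ k ∈ T, a k) with h | h
      · have : c = b j := min_eq_left h
        linarith
      · have : c = t - ∑ k ∈ T, a k := min_eq_right h
        linarith
    obtain ⟨ξ, hξa, hξb, hξs⟩ := ih (t - c) h1' h2'
    refine ⟨Function.update ξ j c, ?_, ?_, ?_⟩
    · intro k
      rcases eq_or_ne k j with rfl | hk
      · simpa using hca
      · simpa [Function.update_of_ne hk] using hξa k
    · intro k
      rcases eq_or_ne k j with rfl | hk
      · rw [Function.update_self]; exact min_le_left _ _
      · simpa [Function.update_of_ne hk] using hξb k
    · rw [Finset.sum_insert hj, Function.update_self]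
      have : ∑ k ∈ T, Function.update ξ j c k = ∑ k ∈ T, ξ k := by
        apply Finset.sum_congr rfl
        intro k hk
        exact Function.update_of_ne (by rintro rfl; exact hj hk) _ _
      rw [this, hξs]; ring

/-- Binary dual certificates are encoded as finsets of indices with value one. -/
theorem stmt_12 {I J : Type*} [Fintype I] [Fintype J] [DecidableEq J]
    (E : I → J → Bool) (q : ℕ) (hq : 0 < q)
    (xbar : I → ℕ)
    (a b : J → ℤ) (ha : ∀ j, 0 ≤ a j) (hab : ∀ j, a j ≤ b j)
    (Γ : ℤ) (hΓ₁ : ∑ j : J, a j ≤ Γ) (hΓ₂ : Γ ≤ ∑ j : J, b j)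
    (S : Finset J)
    (hviol : (∑ i ∈ univ.filter (fun i => ∃ j ∈ S, E i j), (q : ℤ) * xbar i) <
      min (∑ j ∈ S, b j) (Γ - ∑ j ∈ Sᶜ, a j)) :
    ∃ ξ : J → ℤ, ∃ μ : Finset I, ∃ ν : Finset J,
      (∀ j, a j ≤ ξ j) ∧ (∀ j, ξ j ≤ b j) ∧ (∑ j : J, ξ j) = Γ ∧
      (∀ i j, E i j → j ∈ ν → i ∈ μ) ∧
      (∑ i ∈ μ, (q : ℤ) * xbar i) - (∑ j ∈ ν, ξ j) < 0 := by
  classical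
  set m := min (∑ j ∈ S, b j) (Γ - ∑ j ∈ Sᶜ, a j) with hm
  have hsplitA : ∑ j ∈ S, a j + ∑ j ∈ Sᶜ, a j = ∑ j : J, a j := by
    rw [Finset.sum_add_sum_compl]
  have hsplitB : ∑ j ∈ S, b j + ∑ j ∈ Sᶜ, b j = ∑ j : J, b j := by
    rw [Finset.sum_add_sum_compl]
  have haS : ∑ j ∈ S, a j ≤ m := by
    apply le_min (Finset.sum_le_sum fun j _ => hab j)
    linarith
  have hmb : m ≤ ∑ j ∈ S, b j := min_le_left _ _
  -- ξ on S summing to m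
  obtain ⟨ξ₁, hξ₁a, hξ₁b, hξ₁s⟩ := exists_mid a b hab S m haS hmb
  -- ξ on Sᶜ summing to Γ - m
  have haC : ∑ j ∈ Sᶜ, a j ≤ Γ - m := by
    have : m ≤ Γ - ∑ j ∈ Sᶜ, a j := min_le_right _ _
    linarith
  have habC : ∑ j ∈ Sᶜ, a j ≤ ∑ j ∈ Sᶜ, b j := Finset.sum_le_sum fun j _ => hab j
  have hbC : Γ - m ≤ ∑ j ∈ Sᶜ, b j := by
    rcases min_cases (∑ j ∈ S, b j) (Γ - ∑ j ∈ Sᶜ, a j) with ⟨h, _⟩ | ⟨h, _⟩ <;>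
      rw [hm, h] <;> linarith
  obtain ⟨ξ₂, hξ₂a, hξ₂b, hξ₂s⟩ := exists_mid a b hab Sᶜ (Γ - m) haC hbC
  refine ⟨fun j => if j ∈ S then ξ₁ j else ξ₂ j,
    univ.filter (fun i => ∃ j ∈ S, E i j), S, ?_, ?_, ?_, ?_, ?_⟩
  · intro j; by_cases h : j ∈ S <;> simp [h, hξ₁a j, hξ₂a j]
  · intro j; by_cases h : j ∈ S <;> simp [h, hξ₁b j, hξ₂b j]
  · rw [← Finset.sum_add_sum_compl S]
    have e1 : ∑ j ∈ S, (if j ∈ S then ξ₁ j else ξ₂ j) = m := by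
      rw [← hξ₁s]; exact Finset.sum_congr rfl fun j hj => if_pos hj
    have e2 : ∑ j ∈ Sᶜ, (if j ∈ S then ξ₁ j else ξ₂ j) = Γ - m := by
      rw [← hξ₂s]
      exact Finset.sum_congr rfl fun j hj => if_neg (Finset.mem_compl.mp hj)
    rw [e1, e2]; ring
  · intro i j hE hj
    simp only [Finset.mem_filter, Finset.mem_univ, true_and]
    exact ⟨j, hj, hE⟩
  · have : ∑ j ∈ S, (if j ∈ S then ξ₁ j else ξ₂ j) = m := by
      rw [← hξ₁s]; exact Finset.sum_congr rfl fun j hj => if_pos hj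
    rw [this]
    linarith [hviol]
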